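/- Let n > 5 be even and m ≥ 4. In J(n,m), two vertices x and y lying on internal cycles that share no edge are mutually maximally distant if and only if d(x,y) = n+2. -/

import Mathlib

/-- The generalized Jahangir graph `J(n,m)`: vertices are `none` (the central
vertex `c`) and `some a` for `a : ZMod (n*m)` (the cycle vertex `u_{a+1}`).
Cycle vertices are adjacent when consecutive, and `c` is adjacent to
`u_{nk+1}`, i.e. to `some (n*k)`, for `k = 0, …, m-1`. -/
def jahangir (n m : ℕ) : SimpleGraph (Option (ZMod (n * m))) where
  Adj x y :=
    (x = none ∧ ∃ a : ZMod (n * m), y = some a ∧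
        ∃ k : ℕ, k < m ∧ a = ((n * k : ℕ) : ZMod (n * m))) ∨
    (y = none ∧ ∃ a : ZMod (n * m), x = some a ∧
        ∃ k : ℕ, k < m ∧ a = ((n * k : ℕ) : ZMod (n * m))) ∨
    (∃ a b : ZMod (n * m), x = some a ∧ y = some b ∧ a ≠ b ∧ (b = a + 1 ∨ a = b + 1))
  symm := by
    constructor; rintro x y (⟨hx, a, hy, hk⟩ | ⟨hy, a, hx, hk⟩ | ⟨a, b, hx, hy, hab, h⟩)
    · exact Or.inr (Or.inl ⟨hx, a, hy, hk⟩)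
    · exact Or.inl ⟨hy, a, hx, hk⟩
    · exact Or.inr (Or.inr ⟨b, a, hy, hx, hab.symm, h.symm⟩)
  loopless := by
    constructor; rintro x (⟨hx, a, hy, _⟩ | ⟨hy, a, hx, _⟩ | ⟨a, b, hx, hy, hab, _⟩)
    · rw [hx] at hy; cases hy
    · rw [hy] at hx; cases hx
    · rw [hx] at hy; exact hab (Option.some.inj hy)

/-- `u` and `v` are mutually maximally distant in `G`. -/
def MMD {V : Type*} (G : SimpleGraph V) (u v : V) : Prop :=
  (∀ w, G.Adj u w → G.dist w v ≤ G.dist u v) ∧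
  (∀ w, G.Adj v w → G.dist u w ≤ G.dist u v)

/-- The strong resolving graph of `G`: distinct vertices are adjacent iff MMD. -/
def strongResolvingGraph {V : Type*} (G : SimpleGraph V) : SimpleGraph V where
  Adj u v := u ≠ v ∧ MMD G u v
  symm := by
    constructor; rintro u v ⟨hne, h1, h2⟩
    refine ⟨hne.symm, ?_, ?_⟩
    · intro w hw
      rw [SimpleGraph.dist_comm, SimpleGraph.dist_comm (u := v)]
      exact h2 w hw
    · intro w hw
      rw [SimpleGraph.dist_comm, SimpleGraph.dist_comm (u := v)]
      exact h1 w hw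
  loopless := by constructor; intro u h; exact h.1 rfl

/-- The vertex covering number `α(G)`. -/
noncomputable def vertexCoverNumber {V : Type*} (G : SimpleGraph V) : ℕ :=
  sInf {k | ∃ S : Finset V, S.card = k ∧ ∀ u v, G.Adj u v → u ∈ S ∨ v ∈ S}

/-- The independence number `β(G)`. -/
noncomputable def indepNumber {V : Type*} (G : SimpleGraph V) : ℕ :=
  sSup {k | ∃ S : Finset V, S.card = k ∧ ∀ u ∈ S, ∀ v ∈ S, ¬ G.Adj u v}

/-- `W` is a strong resolving set of `G`. -/
def IsStrongResolvingSet {V : Type*} (G : SimpleGraph V) (W : Set V) : Prop :=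
  ∀ u v : V, u ≠ v → ∃ w ∈ W,
    G.dist u w = G.dist u v + G.dist v w ∨ G.dist v w = G.dist v u + G.dist u w

/-- The strong metric dimension of `G`. -/
noncomputable def sdim {V : Type*} (G : SimpleGraph V) : ℕ :=
  sInf {k | ∃ W : Finset V, W.card = k ∧ IsStrongResolvingSet G ↑W}

/-- Vertex set of the internal cycle `c u_{nk+1} … u_{n(k+1)+1} c` of `J(n,m)`. -/
def internalCycle (n m k : ℕ) : Set (Option (ZMod (n * m))) :=
  insert none {x | ∃ i ≤ n, x = some ((n * k + i : ℕ) : ZMod (n * m))}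

/-- Cycle vertices of `J(n,m)` not adjacent to the central vertex `c` (the set `U₂`). -/
def inU2 (n m : ℕ) (x : Option (ZMod (n * m))) : Prop :=
  ∃ a : ZMod (n * m), x = some a ∧ ¬ ∃ k : ℕ, k < m ∧ a = ((n * k : ℕ) : ZMod (n * m))


open SimpleGraph

namespace JA

variable {n m : ℕ}

/-- distance (along the rim) to the nearest spoke position. -/
def sd (n : ℕ) {N : ℕ} (a : ZMod N) : ℕ := min (a.val % n) (n - a.val % n)

/-- cyclic (rim) distance between two positions. -/
def cd {N : ℕ} (a b : ZMod N) : ℕ := min ((a - b).val) ((b - a).val)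

/-- Claimed distance to the fixed cycle vertex `p`. -/
def Df (n : ℕ) {N : ℕ} (p : ZMod N) : Option (ZMod N) → ℕ
  | none => 1 + sd n p
  | some b => min (cd b p) (2 + sd n p + sd n b)

lemma val_sub_add [NeZero (n*m)] (b c : ZMod (n*m)) :
    ((b - c).val + c.val) % n = b.val % n := by
  have h := ZMod.val_add (b - c) c
  rw [sub_add_cancel] at h
  conv_rhs => rw [h]
  exact (Nat.mod_mod_of_dvd _ ⟨m, rfl⟩).symm

lemma spoke_val_mod [NeZero (n*m)] (s : ℕ) :
    (((n*s : ℕ) : ZMod (n*m)).val) % n = 0 := by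
  rw [ZMod.val_natCast, Nat.mod_mod_of_dvd _ ⟨m, rfl⟩, Nat.mul_mod_right]

lemma sd_spoke [NeZero (n*m)] (s : ℕ) : sd n (((n*s : ℕ) : ZMod (n*m))) = 0 := by
  unfold sd
  rw [spoke_val_mod]
  simp

lemma sd_rep [NeZero (n*m)] (hn0 : 0 < n) (k i : ℕ) (hi : i ≤ n) :
    sd n (((n*k+i : ℕ)) : ZMod (n*m)) = min i (n - i) := by
  unfold sd
  rw [ZMod.val_natCast, Nat.mod_mod_of_dvd _ ⟨m, rfl⟩, Nat.mul_add_mod]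
  rcases eq_or_lt_of_le hi with rfl | h
  · simp [Nat.mod_self]
  · rw [Nat.mod_eq_of_lt h]

lemma sd_le_cd_spoke [NeZero (n*m)] (hn0 : 0 < n) (s : ℕ) (b : ZMod (n*m)) :
    sd n b ≤ cd (((n*s : ℕ)) : ZMod (n*m)) b := by
  set w : ZMod (n*m) := ((n*s : ℕ) : ZMod (n*m)) with hw
  set r := b.val % n with hr
  have hrn : r < n := Nat.mod_lt _ hn0
  have h1 : r ≤ (b - w).val := by
    have h := val_sub_add (n := n) (m := m) b w
    obtain ⟨t, ht⟩ := Nat.dvd_of_mod_eq_zero (spoke_val_mod (n := n) (m := m) s)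
    rw [ht, Nat.add_mul_mod_self_left] at h
    calc r = (b - w).val % n := h.symm
      _ ≤ (b - w).val := Nat.mod_le _ _
  have h2 : ((w - b).val + r) % n = 0 := by
    have h := val_sub_add (n := n) (m := m) w b
    rw [spoke_val_mod] at h
    conv_lhs at h => rw [← Nat.div_add_mod b.val n, ← hr,
      show (w - b).val + (n * (b.val / n) + r) = ((w - b).val + r) + (b.val / n) * n by ring]
    rwa [Nat.add_mul_mod_self_right] at h
  rcases Nat.eq_zero_or_pos r with hr0 | hrpos
  · unfold sd cd; omega
  · obtain ⟨t, ht⟩ := Nat.dvd_of_mod_eq_zero h2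
    have htpos : 0 < t := by
      rcases Nat.eq_zero_or_pos t with rfl | h
      · omega
      · exact h
    have hnt : n ≤ n * t := Nat.le_mul_of_pos_right n htpos
    have h3 : n - r ≤ (w - b).val := by omega
    unfold sd cd
    omega

lemma val_one' [NeZero (n*m)] (h2 : 2 ≤ n*m) : (1 : ZMod (n*m)).val = 1 := by
  rw [← Nat.cast_one, ZMod.val_natCast, Nat.mod_eq_of_lt h2]

lemma val_succ [NeZero (n*m)] (h2 : 2 ≤ n*m) (x : ZMod (n*m)) :
    (x+1).val = x.val + 1 ∨ (x.val + 1 = n*m ∧ (x+1).val = 0) := by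
  have h := ZMod.val_add x 1
  rw [val_one' h2] at h
  have hx := ZMod.val_lt x
  rcases eq_or_lt_of_le (Nat.succ_le_of_lt hx) with he | hl
  · right
    have he' : x.val + 1 = n*m := he
    exact ⟨he', by rw [h, he', Nat.mod_self]⟩
  · left
    rw [h, Nat.mod_eq_of_lt hl]

lemma cd_lip [NeZero (n*m)] (h2 : 2 ≤ n*m) (a p : ZMod (n*m)) :
    cd (a+1) p ≤ cd a p + 1 ∧ cd a p ≤ cd (a+1) p + 1 := by
  have e1 : a + 1 - p = (a - p) + 1 := by ring
  have e2 : p - a = (p - (a+1)) + 1 := by ring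
  have h1 := val_succ h2 (a - p)
  have h2' := val_succ h2 (p - (a+1))
  rw [← e1] at h1
  rw [← e2] at h2'
  unfold cd
  rcases h1 with h1 | ⟨h1a, h1b⟩
  · rcases h2' with h2'' | ⟨h2a, h2b⟩
    · omega
    · -- v2 + 1 = nm, v1 = 0 : p = a
      have hpa : p - a = 0 := by
        rw [← ZMod.val_eq_zero]; exact h2b
      have hap : a - p = 0 := by linear_combination -hpa
      have hu2 : a + 1 - p = 1 := by linear_combination -hpa
      rw [hap, hu2] at *
      rw [val_one' h2, ZMod.val_zero] at *
      omega
  · -- u1 + 1 = nm, u2 = 0 : a - p = -1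
    have hc : a - p + 1 = 0 := by
      have hcv : (((a-p).val : ℕ) : ZMod (n*m)) = a - p := ZMod.natCast_rightInverse _
      calc a - p + 1 = (((a-p).val + 1 : ℕ) : ZMod (n*m)) := by rw [Nat.cast_add, hcv]; push_cast; ring
        _ = ((n*m : ℕ) : ZMod (n*m)) := by rw [h1a]
        _ = 0 := ZMod.natCast_self _
    have hpa : p - a = 1 := by linear_combination -hc
    have hv2 : p - (a + 1) = 0 := by linear_combination -hc
    rw [hpa, hv2, h1b] at *
    rw [val_one' h2, ZMod.val_zero] at *
    omega

lemma sd_lip [NeZero (n*m)] (hn1 : 1 < n) (hm0 : 0 < m) (a : ZMod (n*m)) :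
    sd n (a+1) ≤ sd n a + 1 ∧ sd n a ≤ sd n (a+1) + 1 := by
  have hn0 : 0 < n := by omega
  have h2 : 2 ≤ n*m := by
    calc 2 ≤ n := by omega
      _ = n * 1 := by ring
      _ ≤ n * m := Nat.mul_le_mul_left n hm0
  rcases val_succ h2 a with h | ⟨h, h'⟩
  · unfold sd
    rw [h]
    have hrn : a.val % n < n := Nat.mod_lt _ hn0
    have hmod : (a.val + 1) % n = (a.val % n + 1) % n := by
      conv_lhs => rw [← Nat.div_add_mod a.val n,
        show n * (a.val / n) + a.val % n + 1 = (a.val % n + 1) + (a.val / n) * n by ring]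
      rw [Nat.add_mul_mod_self_right]
    rw [hmod]
    rcases eq_or_lt_of_le (Nat.succ_le_of_lt hrn) with he | hl
    · have he' : a.val % n + 1 = n := he
      rw [he', Nat.mod_self]
      omega
    · rw [Nat.mod_eq_of_lt hl]
      omega
  · unfold sd
    rw [h', Nat.zero_mod]
    have hrval : a.val % n = n - 1 := by
      have hm1 : n * m = n * (m-1) + n := by
        have hmm : m - 1 + 1 = m := by omega
        calc n * m = n * ((m-1)+1) := by rw [hmm]
          _ = n * (m-1) + n := by ring
      have hav : a.val = n * (m-1) + (n-1) := by omega
      rw [hav, Nat.mul_add_mod, Nat.mod_eq_of_lt (by omega)]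
    rw [hrval]
    omega


lemma two_le_nm (hn : 5 < n) (hm : 4 ≤ m) : 2 ≤ n * m := by
  calc 2 ≤ n := by omega
    _ = n * 1 := by ring
    _ ≤ n * m := Nat.mul_le_mul_left n (by omega)

lemma Df_lip [NeZero (n*m)] (hn : 5 < n) (hm : 4 ≤ m) (p : ZMod (n*m)) :
    ∀ u v, (jahangir n m).Adj u v → Df n p u ≤ Df n p v + 1 := by
  have h2 : 2 ≤ n*m := two_le_nm hn hm
  have hn0 : 0 < n := by omega
  rintro u v (⟨rfl, a, rfl, k, hk, rfl⟩ | ⟨rfl, a, rfl, k, hk, rfl⟩ | ⟨a, b, rfl, rfl, hab, hor⟩)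
  · have hge := sd_le_cd_spoke (n := n) (m := m) hn0 k p
    have h0 := sd_spoke (n := n) (m := m) k
    simp only [Df]
    have hsym : cd (((n*k : ℕ)) : ZMod (n*m)) p = cd p (((n*k : ℕ)) : ZMod (n*m)) := by
      unfold cd; omega
    omega
  · have h0 := sd_spoke (n := n) (m := m) k
    simp only [Df]
    omega
  · rcases hor with rfl | rfl
    · have hc := cd_lip h2 a p
      have hs := sd_lip (by omega : 1 < n) (by omega : 0 < m) a
      simp only [Df]
      omega
    · have hc := cd_lip h2 b p
      have hs := sd_lip (by omega : 1 < n) (by omega : 0 < m) b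
      simp only [Df]
      omega

lemma adj_succ [NeZero (n*m)] (h2 : 2 ≤ n*m) (b : ZMod (n*m)) :
    (jahangir n m).Adj (some b) (some (b+1)) := by
  have hone : (1 : ZMod (n*m)) ≠ 0 := by
    intro h
    have := congrArg ZMod.val h
    rw [val_one' h2, ZMod.val_zero] at this
    omega
  exact Or.inr (Or.inr ⟨b, b+1, rfl, rfl,
    fun h => hone (left_eq_add.mp h), Or.inl rfl⟩)

lemma exists_walk_right [NeZero (n*m)] (h2 : 2 ≤ n*m) (a : ZMod (n*m)) (t : ℕ) :
    ∃ p : (jahangir n m).Walk (some a) (some (a + (t : ℕ))), p.length = t := by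
  induction t with
  | zero => exact ⟨(SimpleGraph.Walk.nil).copy rfl (by norm_num), by simp⟩
  | succ t ih =>
    obtain ⟨p, hp⟩ := ih
    have hcast : (((t+1 : ℕ)) : ZMod (n*m)) = ((t : ℕ) : ZMod (n*m)) + 1 := by push_cast; ring
    have hadj : (jahangir n m).Adj (some (a + ((t : ℕ) : ZMod (n*m)))) (some (a + (((t+1 : ℕ)) : ZMod (n*m)))) := by
      rw [hcast, ← add_assoc]
      exact adj_succ h2 _
    exact ⟨p.concat hadj, by rw [SimpleGraph.Walk.length_concat, hp]⟩

lemma exists_walk_from_c [NeZero (n*m)] (hn : 5 < n) (hm : 4 ≤ m) (a : ZMod (n*m)) :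
    ∃ p : (jahangir n m).Walk none (some a), p.length = 1 + sd n a := by
  have h2 : 2 ≤ n*m := two_le_nm hn hm
  have hn0 : 0 < n := by omega
  have hm0 : 0 < m := by omega
  set q := a.val / n with hq
  set r := a.val % n with hr
  have hdm : n * q + r = a.val := Nat.div_add_mod a.val n
  have hrn : r < n := Nat.mod_lt _ hn0
  have hvlt : a.val < n * m := ZMod.val_lt a
  have hqm : q < m := by
    by_contra h
    push_neg at h
    have : n * m ≤ n * q := Nat.mul_le_mul_left n h
    omega
  have hval : ((a.val : ℕ) : ZMod (n*m)) = a := ZMod.natCast_rightInverse a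
  have hsd : sd n a = min r (n - r) := by unfold sd; rw [← hr]
  by_cases hcase : r ≤ n - r
  · obtain ⟨p, hp⟩ := exists_walk_right h2 (((n*q : ℕ)) : ZMod (n*m)) r
    have he : (((n*q : ℕ)) : ZMod (n*m)) + ((r : ℕ) : ZMod (n*m)) = a := by
      rw [← Nat.cast_add, hdm, hval]
    have hadj : (jahangir n m).Adj none (some (((n*q : ℕ)) : ZMod (n*m))) :=
      Or.inl ⟨rfl, _, rfl, q, hqm, rfl⟩
    refine ⟨(SimpleGraph.Walk.cons hadj p).copy rfl (by rw [he]), ?_⟩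
    simp only [SimpleGraph.Walk.length_copy, SimpleGraph.Walk.length_cons, hp]
    omega
  · set t := n - r with ht
    obtain ⟨p, hp⟩ := exists_walk_right h2 a t
    have hnq : n * (q+1) = n * q + n := by ring
    have he : a + ((t : ℕ) : ZMod (n*m)) = ((n*(q+1) : ℕ) : ZMod (n*m)) := by
      rw [← hval, ← Nat.cast_add]
      congr 1
      omega
    have hsm : (q+1) % m < m := Nat.mod_lt _ hm0
    have hcast : ((n*(q+1) : ℕ) : ZMod (n*m)) = ((n*((q+1) % m) : ℕ) : ZMod (n*m)) := by
      conv_lhs => rw [← Nat.div_add_mod (q+1) m,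
        show n * (m * ((q+1)/m) + (q+1)%m) = (n*m) * ((q+1)/m) + n*((q+1)%m) by ring]
      rw [Nat.cast_add, Nat.cast_mul, ZMod.natCast_self]
      simp
    have hadj : (jahangir n m).Adj none (some (a + ((t : ℕ) : ZMod (n*m)))) := by
      refine Or.inl ⟨rfl, _, rfl, (q+1)%m, hsm, ?_⟩
      rw [he, hcast]
    refine ⟨SimpleGraph.Walk.cons hadj p.reverse, ?_⟩
    simp only [SimpleGraph.Walk.length_cons, SimpleGraph.Walk.length_reverse, hp]
    omega

lemma reach [NeZero (n*m)] (hn : 5 < n) (hm : 4 ≤ m) (u v : Option (ZMod (n*m))) :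
    (jahangir n m).Reachable u v := by
  have hc : ∀ a : ZMod (n*m), (jahangir n m).Reachable none (some a) := fun a =>
    ⟨(exists_walk_from_c hn hm a).choose⟩
  match u, v with
  | none, none => exact SimpleGraph.Reachable.refl _
  | none, some a => exact hc a
  | some a, none => exact (hc a).symm
  | some a, some b => exact (hc a).symm.trans (hc b)

lemma walk_lb {V : Type*} {G : SimpleGraph V} (f : V → ℕ)
    (hf : ∀ u v, G.Adj u v → f u ≤ f v + 1) {u v : V} (p : G.Walk u v) :
    f u ≤ f v + p.length := by
  induction p with
  | nil => simp
  | cons h q ih =>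
    rename_i a b c
    have := hf a b h
    simp only [SimpleGraph.Walk.length_cons]
    omega

lemma dist_lb {V : Type*} {G : SimpleGraph V} (f : V → ℕ)
    (hf : ∀ u v, G.Adj u v → f u ≤ f v + 1) {u v : V} (hr : G.Reachable u v) :
    f u ≤ f v + G.dist u v := by
  obtain ⟨p, hp⟩ := hr.exists_walk_length_eq_dist
  rw [← hp]
  exact walk_lb f hf p

lemma dist_le_through_c [NeZero (n*m)] (hn : 5 < n) (hm : 4 ≤ m) (a b : ZMod (n*m)) :
    (jahangir n m).dist (some a) (some b) ≤ 2 + sd n a + sd n b := by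
  obtain ⟨p, hp⟩ := exists_walk_from_c hn hm a
  obtain ⟨q, hq⟩ := exists_walk_from_c hn hm b
  have h := SimpleGraph.dist_le (p.reverse.append q)
  rw [SimpleGraph.Walk.length_append, SimpleGraph.Walk.length_reverse, hp, hq] at h
  omega

lemma Df_self [NeZero (n*m)] (p : ZMod (n*m)) : Df n p (some p) = 0 := by
  simp [Df, cd, sub_self, ZMod.val_zero]

lemma dist_c_eq [NeZero (n*m)] (hn : 5 < n) (hm : 4 ≤ m) (k j : ℕ) (hk : k < m) (hj : j ≤ n) :
    (jahangir n m).dist none (some ((n*k+j : ℕ))) = 1 + min j (n - j) := by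
  have hn0 : 0 < n := by omega
  set p : ZMod (n*m) := ((n*k + j : ℕ) : ZMod (n*m)) with hp
  have hsd : sd n p = min j (n-j) := sd_rep hn0 k j hj
  apply le_antisymm
  · obtain ⟨w, hw⟩ := exists_walk_from_c hn hm p
    have h := SimpleGraph.dist_le w
    omega
  · have h := dist_lb (Df n p) (Df_lip hn hm p) (reach hn hm none (some p))
    rw [Df_self] at h
    simp only [Df] at h
    omega

lemma diam_le [NeZero (n*m)] (hn : 5 < n) (hm : 4 ≤ m) (u v : Option (ZMod (n*m))) :
    (jahangir n m).dist u v ≤ n + 2 := by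
  have hsd : ∀ a : ZMod (n*m), sd n a ≤ n/2 := by
    intro a
    unfold sd
    have := Nat.mod_lt a.val (show 0 < n by omega)
    omega
  match u, v with
  | none, none => simp [SimpleGraph.dist_self]
  | none, some a =>
    obtain ⟨p, hp⟩ := exists_walk_from_c hn hm a
    have h := SimpleGraph.dist_le p
    have := hsd a
    omega
  | some a, none =>
    rw [SimpleGraph.dist_comm]
    obtain ⟨p, hp⟩ := exists_walk_from_c hn hm a
    have h := SimpleGraph.dist_le p
    have := hsd a
    omega
  | some a, some b =>
    have h := dist_le_through_c hn hm a b
    have := hsd a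
    have := hsd b
    omega

lemma rim [NeZero (n*m)] (hn : 5 < n) (hm : 4 ≤ m) (k k' i j : ℕ)
    (hk : k < m) (hk' : k' < m) (hi : i ≤ n) (hj : j ≤ n)
    (h0 : k ≠ k') (h1 : ((k : ℤ) - k').natAbs ≠ 1) (h2 : ((k : ℤ) - k').natAbs ≠ m - 1) :
    2*(n : ℤ) + i - j ≤ ((((n*k+i : ℕ) : ZMod (n*m)) - ((n*k'+j : ℕ) : ZMod (n*m))).val : ℤ) := by
  set px : ZMod (n*m) := ((n*k+i : ℕ) : ZMod (n*m)) with hpx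
  set py : ZMod (n*m) := ((n*k'+j : ℕ) : ZMod (n*m)) with hpy
  set d : ℕ := (px - py).val with hd
  have hdlt : d < n*m := ZMod.val_lt _
  have hcv : ((d : ℕ) : ZMod (n*m)) = px - py := ZMod.natCast_rightInverse _
  have hdvd : ((n*m : ℕ) : ℤ) ∣ ((d : ℤ) - (n*k+i) + (n*k'+j)) := by
    rw [← ZMod.intCast_zmod_eq_zero_iff_dvd]
    push_cast
    rw [hcv, hpx, hpy]
    push_cast
    ring
  obtain ⟨w, hw⟩ := hdvd
  set c : ℤ := (k : ℤ) - k' + m*w with hc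
  have hdc : (d : ℤ) = n*c + i - j := by
    rw [hc]
    push_cast at hw ⊢
    linarith [hw]
  have hd0 : (0 : ℤ) ≤ d := Int.natCast_nonneg d
  have hdlt' : (d : ℤ) < (n : ℤ) * m := by exact_mod_cast hdlt
  have hin : (i : ℤ) ≤ n := by exact_mod_cast hi
  have hjn : (j : ℤ) ≤ n := by exact_mod_cast hj
  have hj0 : (0 : ℤ) ≤ j := Int.natCast_nonneg j
  have hi0 : (0 : ℤ) ≤ i := Int.natCast_nonneg i
  have hnn : (5 : ℤ) < n := by exact_mod_cast hn
  have hge : -1 ≤ c := by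
    by_contra hcon
    push_neg at hcon
    have h2c : c ≤ -2 := by omega
    have hmul : (n : ℤ)*c ≤ (n : ℤ)*(-2) := mul_le_mul_of_nonneg_left h2c (by linarith)
    have : (n : ℤ)*(-2) = -(2*n) := by ring
    linarith
  have hle : c ≤ m := by
    by_contra hcon
    push_neg at hcon
    have h2c : (m : ℤ)+1 ≤ c := by omega
    have hmul : (n : ℤ)*((m : ℤ)+1) ≤ (n : ℤ)*c := mul_le_mul_of_nonneg_left h2c (by linarith)
    have : (n : ℤ)*((m : ℤ)+1) = (n : ℤ)*m + n := by ring
    linarith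
  have hwcases : w = -1 ∨ w = 0 ∨ w = 1 := by
    have hmz : (4 : ℤ) ≤ m := by exact_mod_cast hm
    have hkz : (k : ℤ) < m := by exact_mod_cast hk
    have hkz' : (k' : ℤ) < m := by exact_mod_cast hk'
    have hk0 : (0 : ℤ) ≤ k := Int.natCast_nonneg k
    have hk0' : (0 : ℤ) ≤ k' := Int.natCast_nonneg k'
    by_contra hcon
    push_neg at hcon
    rcases (by omega : w ≤ -2 ∨ 2 ≤ w) with hw2 | hw2
    · have : (m : ℤ)*w ≤ (m : ℤ)*(-2) := mul_le_mul_of_nonneg_left hw2 (by linarith)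
      have h3 : (m : ℤ)*(-2) = -(2*m) := by ring
      omega
    · have : (m : ℤ)*2 ≤ (m : ℤ)*w := mul_le_mul_of_nonneg_left hw2 (by linarith)
      have h3 : (m : ℤ)*2 = 2*m := by ring
      omega
  have hc2 : 2 ≤ c := by
    have hmz : (4 : ℤ) ≤ m := by exact_mod_cast hm
    have hkz : (k : ℤ) < m := by exact_mod_cast hk
    have hkz' : (k' : ℤ) < m := by exact_mod_cast hk'
    have hk0 : (0 : ℤ) ≤ k := Int.natCast_nonneg k
    have hk0' : (0 : ℤ) ≤ k' := Int.natCast_nonneg k'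
    have hne : (k : ℤ) ≠ k' := by exact_mod_cast fun h => h0 (by exact_mod_cast h)
    have hm1 : ((m : ℤ) - 1).natAbs = m - 1 := by omega
    rcases hwcases with rfl | rfl | rfl <;> omega
  have hmul : (n : ℤ)*2 ≤ (n : ℤ)*c := mul_le_mul_of_nonneg_left hc2 (by linarith)
  linarith

lemma dist_eq [NeZero (n*m)] (hn : 5 < n) (hm : 4 ≤ m) (k k' i j : ℕ)
    (hk : k < m) (hk' : k' < m) (hi : i ≤ n) (hj : j ≤ n)
    (h0 : k ≠ k') (h1 : ((k : ℤ) - k').natAbs ≠ 1) (h2 : ((k : ℤ) - k').natAbs ≠ m - 1) :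
    (jahangir n m).dist (some ((n*k+i : ℕ) : ZMod (n*m))) (some ((n*k'+j : ℕ) : ZMod (n*m)))
      = 2 + min i (n-i) + min j (n-j) := by
  have hn0 : 0 < n := by omega
  have h1' : ((k' : ℤ) - k).natAbs ≠ 1 := by omega
  have h2' : ((k' : ℤ) - k).natAbs ≠ m - 1 := by omega
  have hr1 := rim hn hm k k' i j hk hk' hi hj h0 h1 h2
  have hr2 := rim hn hm k' k j i hk' hk hj hi (fun h => h0 h.symm) h1' h2'
  set px : ZMod (n*m) := ((n*k+i : ℕ) : ZMod (n*m)) with hpx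
  set py : ZMod (n*m) := ((n*k'+j : ℕ) : ZMod (n*m)) with hpy
  have hsx : sd n px = min i (n-i) := sd_rep hn0 k i hi
  have hsy : sd n py = min j (n-j) := sd_rep hn0 k' j hj
  apply le_antisymm
  · have h := dist_le_through_c hn hm px py
    omega
  · have h := dist_lb (Df n py) (Df_lip hn hm py) (reach hn hm (some px) (some py))
    rw [Df_self] at h
    simp only [Df] at h
    -- cd px py ≥ 2 + min i (n-i) + min j (n-j)
    have hcd : 2 + min i (n-i) + min j (n-j) ≤ cd px py := by
      unfold cd
      omega
    omega

end JA

theorem stmt_10 (n m : ℕ) (hn : 5 < n) (hev : Even n) (hm : 4 ≤ m)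
    (k k' : ℕ) (hk : k < m) (hk' : k' < m) (hkk : k ≠ k')
    (hshare : ((k : ℤ) - (k' : ℤ)).natAbs ≠ 1 ∧ ((k : ℤ) - (k' : ℤ)).natAbs ≠ m - 1)
    (x y : Option (ZMod (n * m)))
    (hx : x ∈ internalCycle n m k) (hy : y ∈ internalCycle n m k') :
    MMD (jahangir n m) x y ↔ (jahangir n m).dist x y = n + 2 := by
  haveI : NeZero (n*m) := ⟨Nat.mul_ne_zero (by omega) (by omega)⟩
  have h2 : 2 ≤ n*m := JA.two_le_nm hn hm
  have hn0 : 0 < n := by omega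
  have hm0 : 0 < m := by omega
  obtain ⟨h, hh⟩ := hev
  obtain ⟨h1, h2'⟩ := hshare
  have far : ∀ k0 : ℕ, k0 < m → ∃ s : ℕ, s < m ∧ s ≠ k0 ∧
      ((s : ℤ) - k0).natAbs ≠ 1 ∧ ((s : ℤ) - k0).natAbs ≠ m - 1 := by
    intro k0 hk0
    rcases Nat.lt_or_ge (k0+2) m with hlt | hge
    · exact ⟨k0+2, by omega, by omega, by omega, by omega⟩
    · exact ⟨k0+2-m, by omega, by omega, by omega, by omega⟩
  simp only [internalCycle, Set.mem_insert_iff, Set.mem_setOf_eq] at hx hy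
  rcases hx with rfl | ⟨i, hi, rfl⟩
  · rcases hy with rfl | ⟨j, hj, rfl⟩
    · -- both centre
      have hadj : (jahangir n m).Adj none (some ((n*0+0 : ℕ) : ZMod (n*m))) :=
        Or.inl ⟨rfl, _, rfl, 0, hm0, by norm_num⟩
      have hd0 := JA.dist_c_eq hn hm 0 0 hm0 (by omega)
      constructor
      · rintro ⟨hA, -⟩
        exfalso
        have hle := hA _ hadj
        rw [SimpleGraph.dist_self, SimpleGraph.dist_comm, hd0] at hle
        omega
      · intro hd
        exfalso
        rw [SimpleGraph.dist_self] at hd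
        omega
    · -- x = centre, y on rim
      have hxy := JA.dist_c_eq hn hm k' j hk' hj
      constructor
      · rintro ⟨hA, -⟩
        exfalso
        obtain ⟨s, hs, hs0, hs1, hs2⟩ := far k' hk'
        have hadj : (jahangir n m).Adj none (some ((n*s+0 : ℕ) : ZMod (n*m))) :=
          Or.inl ⟨rfl, _, rfl, s, hs, by norm_num⟩
        have hdw := JA.dist_eq hn hm s k' 0 j hs hk' (by omega) hj hs0 hs1 hs2
        have hle := hA _ hadj
        rw [hdw, hxy] at hle
        omega
      · intro hd
        exfalso
        rw [hxy] at hd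
        omega
  · rcases hy with rfl | ⟨j, hj, rfl⟩
    · -- x on rim, y = centre
      have hxy : (jahangir n m).dist (some ((n*k+i : ℕ) : ZMod (n*m))) none
          = 1 + min i (n-i) := by
        rw [SimpleGraph.dist_comm]
        exact JA.dist_c_eq hn hm k i hk hi
      constructor
      · rintro ⟨-, hB⟩
        exfalso
        obtain ⟨s, hs, hs0, hs1, hs2⟩ := far k hk
        have hadj : (jahangir n m).Adj none (some ((n*s+0 : ℕ) : ZMod (n*m))) :=
          Or.inl ⟨rfl, _, rfl, s, hs, by norm_num⟩
        have hdw := JA.dist_eq hn hm k s i 0 hk hs hi (by omega)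
          (fun hcon => hs0 hcon.symm) (by omega) (by omega)
        have hle := hB _ hadj
        rw [hdw, hxy] at hle
        omega
      · intro hd
        exfalso
        rw [hxy] at hd
        omega
    · -- both on rim
      have hdxy := JA.dist_eq hn hm k k' i j hk hk' hi hj hkk h1 h2'
      constructor
      · rintro ⟨hA, hB⟩
        have hI : min i (n-i) = h := by
          by_contra hne
          rcases (by omega : i < h ∨ h < i) with hlt | hgt
          · have hc1 : ((n*k+(i+1) : ℕ) : ZMod (n*m)) = ((n*k+i : ℕ) : ZMod (n*m)) + 1 := by
              push_cast; ring
            have hadj : (jahangir n m).Adj (some ((n*k+i : ℕ) : ZMod (n*m)))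
                (some ((n*k+(i+1) : ℕ) : ZMod (n*m))) := by
              rw [hc1]; exact JA.adj_succ h2 _
            have hdw := JA.dist_eq hn hm k k' (i+1) j hk hk' (by omega) hj hkk h1 h2'
            have hle := hA _ hadj
            rw [hdw, hdxy] at hle
            omega
          · have hc1 : ((n*k+i : ℕ) : ZMod (n*m)) = ((n*k+(i-1) : ℕ) : ZMod (n*m)) + 1 := by
              rw [show n*k+i = (n*k+(i-1))+1 by omega]
              push_cast; ring
            have hadj : (jahangir n m).Adj (some ((n*k+i : ℕ) : ZMod (n*m)))
                (some ((n*k+(i-1) : ℕ) : ZMod (n*m))) := by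
              rw [hc1]; exact (JA.adj_succ h2 _).symm
            have hdw := JA.dist_eq hn hm k k' (i-1) j hk hk' (by omega) hj hkk h1 h2'
            have hle := hA _ hadj
            rw [hdw, hdxy] at hle
            omega
        have hJ : min j (n-j) = h := by
          by_contra hne
          rcases (by omega : j < h ∨ h < j) with hlt | hgt
          · have hc1 : ((n*k'+(j+1) : ℕ) : ZMod (n*m)) = ((n*k'+j : ℕ) : ZMod (n*m)) + 1 := by
              push_cast; ring
            have hadj : (jahangir n m).Adj (some ((n*k'+j : ℕ) : ZMod (n*m)))
                (some ((n*k'+(j+1) : ℕ) : ZMod (n*m))) := by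
              rw [hc1]; exact JA.adj_succ h2 _
            have hdw := JA.dist_eq hn hm k k' i (j+1) hk hk' hi (by omega) hkk h1 h2'
            have hle := hB _ hadj
            rw [hdw, hdxy] at hle
            omega
          · have hc1 : ((n*k'+j : ℕ) : ZMod (n*m)) = ((n*k'+(j-1) : ℕ) : ZMod (n*m)) + 1 := by
              rw [show n*k'+j = (n*k'+(j-1))+1 by omega]
              push_cast; ring
            have hadj : (jahangir n m).Adj (some ((n*k'+j : ℕ) : ZMod (n*m)))
                (some ((n*k'+(j-1) : ℕ) : ZMod (n*m))) := by
              rw [hc1]; exact (JA.adj_succ h2 _).symm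
            have hdw := JA.dist_eq hn hm k k' i (j-1) hk hk' hi (by omega) hkk h1 h2'
            have hle := hB _ hadj
            rw [hdw, hdxy] at hle
            omega
        rw [hdxy]
        omega
      · intro hd
        refine ⟨fun w hw => ?_, fun w hw => ?_⟩
        · rw [hd]
          exact JA.diam_le hn hm _ _
        · rw [hd]
          exact JA.diam_le hn hm _ _
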